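/- arXiv:2102.07317 — 2 statements merged into one kernel-verified Lean document; each statement's English description precedes it below -/
import Mathlib

section
/- The integrality gap of the LP relaxation of the frequency-setting problem is unbounded: for every real M > 0 there exists an instance (a single line with frequency levels 1..F, budget R, valuations v_f, costs c_f) such that the ratio of the optimal value of the LP relaxation to the optimal value of the integer program exceeds M. -/
open BigOperators

/-- LP-relaxation feasibility for the single-line frequency-setting problem. -/
def LPfeas (F : ℕ) (T R : ℝ) (z x : Fin F → ℝ) : Prop :=
  (∀ f, 0 ≤ z f ∧ z f ≤ 1) ∧ (∀ f f' : Fin F, f' ≤ f → z f ≤ z f') ∧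
  (∑ f, T * z f ≤ R) ∧ (∀ f, 0 ≤ x f ∧ x f ≤ 1) ∧ (∑ f, x f ≤ 1) ∧ (∀ f, x f ≤ z f)

/-- Objective of the frequency-setting problem. -/
def freqObj (F : ℕ) (v c : Fin F → ℝ) (o : ℝ) (z x : Fin F → ℝ) : ℝ :=
  (∑ f, (v f - c f) * x f) - o * ∑ f, z f

/-- The integrality gap of the LP relaxation of the frequency-setting problem is unbounded:
for every `M > 0` there is an instance whose LP optimal value exceeds `M` times its
(positive) integer optimal value. -/
theorem stmt_2 :
    ∀ M : ℝ, 0 < M →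
      ∃ (F : ℕ) (T R : ℝ) (v c : Fin F → ℝ) (o : ℝ) (Lval Ival : ℝ),
        IsGreatest {w | ∃ z x : Fin F → ℝ, LPfeas F T R z x ∧ w = freqObj F v c o z x} Lval ∧
        IsGreatest {w | ∃ z x : Fin F → ℝ, LPfeas F T R z x ∧ (∀ f, z f = 0 ∨ z f = 1) ∧
          w = freqObj F v c o z x} Ival ∧
        0 < Ival ∧ M * Ival < Lval := by
  intro M hM
  refine ⟨2, 1, 1, ![1, 2*M+2], 0, 0, M + 3/2, 1, ?_, ?_, one_pos, by linarith⟩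
  · constructor
    · refine ⟨![1/2, 1/2], ![1/2, 1/2], ?_, ?_⟩
      · refine ⟨?_, ?_, ?_, ?_, ?_, ?_⟩ <;>
          simp [Fin.forall_fin_two, Fin.sum_univ_two] <;> norm_num
      · simp [freqObj, Fin.sum_univ_two]; ring
    · rintro w ⟨z, x, ⟨hz01, hmono, hbud, hx01, hxsum, hxz⟩, rfl⟩
      have h10 : z 1 ≤ z 0 := hmono 1 0 (by omega)
      have hb : z 0 + z 1 ≤ 1 := by
        have := hbud; simpa [Fin.sum_univ_two] using this
      have hx1z : x 1 ≤ z 1 := hxz 1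
      have hxs : x 0 + x 1 ≤ 1 := by simpa [Fin.sum_univ_two] using hxsum
      have hx1n : 0 ≤ x 1 := (hx01 1).1
      simp only [freqObj, Fin.sum_univ_two]
      have : (![1, 2*M+2] : Fin 2 → ℝ) 0 = 1 := rfl
      have h2 : (![1, 2*M+2] : Fin 2 → ℝ) 1 = 2*M+2 := rfl
      rw [this, h2]
      simp only [Pi.zero_apply]
      nlinarith [hM]
  · constructor
    · refine ⟨![1, 0], ![1, 0], ?_, ?_, ?_⟩
      · refine ⟨?_, ?_, ?_, ?_, ?_, ?_⟩
        · simp [Fin.forall_fin_two]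
        · intro f f' h
          fin_cases f <;> fin_cases f' <;> simp_all
        · simp [Fin.sum_univ_two]
        · simp [Fin.forall_fin_two]
        · simp [Fin.sum_univ_two]
        · simp [Fin.forall_fin_two]
      · intro f; fin_cases f <;> simp
      · simp [freqObj, Fin.sum_univ_two]
    · rintro w ⟨z, x, ⟨hz01, hmono, hbud, hx01, hxsum, hxz⟩, hint, rfl⟩
      have h10 : z 1 ≤ z 0 := hmono 1 0 (by omega)
      have hb : z 0 + z 1 ≤ 1 := by simpa [Fin.sum_univ_two] using hbud
      have hz1 : z 1 = 0 := by
        rcases hint 1 with h | h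
        · exact h
        · rcases hint 0 with h0 | h0 <;> rw [h] at h10 <;> linarith [h10, hb, h ▸ hb]
      have hx1 : x 1 = 0 := le_antisymm (hz1 ▸ hxz 1) (hx01 1).1
      simp only [freqObj, Fin.sum_univ_two]
      have h0 : (![1, 2*M+2] : Fin 2 → ℝ) 0 = 1 := rfl
      rw [h0, hx1]
      simp only [Pi.zero_apply]
      have := (hx01 0).2
      nlinarith
end

section
/- Validity of lift-and-project cuts: let P = {z ∈ [0,1]^n : Az ≤ b} and fix a coordinate j. Any inequality κ·z ≤ κ_0 obtained from multipliers u, v ≥ 0 and u_0, v_0 ≥ 0 with κ ≤ uᵀA + u_0 e_j, κ ≤ vᵀA − v_0 e_j, κ_0 ≥ uᵀb, κ_0 ≥ vᵀb − v_0 is valid for all z ∈ P with z_j ∈ {0,1}, i.e., it is valid for conv((P ∩ {z_j = 0}) ∪ (P ∩ {z_j = 1})). -/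
open BigOperators Matrix

/-- Validity of lift-and-project cuts: for `P = {z : Az ≤ b}` (the system including the
bounds `0 ≤ z ≤ 1`) and a coordinate `j`, any inequality `κ·z ≤ κ₀` derived from
multipliers `u, v ≥ 0`, `u₀, v₀ ≥ 0` with `κ ≤ uᵀA + u₀e_j`, `κ ≤ vᵀA − v₀e_j`,
`κ₀ ≥ uᵀb`, `κ₀ ≥ vᵀb − v₀` is valid on `conv((P ∩ {z_j = 0}) ∪ (P ∩ {z_j = 1}))`. -/
theorem stmt_15 (mR n : ℕ) (A : Matrix (Fin mR) (Fin n) ℝ) (b : Fin mR → ℝ)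
    (hbounds : ∀ z : Fin n → ℝ, A.mulVec z ≤ b → ∀ i, 0 ≤ z i ∧ z i ≤ 1)
    (j : Fin n) (u v : Fin mR → ℝ) (u0 v0 : ℝ)
    (hu : 0 ≤ u) (hv : 0 ≤ v) (hu0 : 0 ≤ u0) (hv0 : 0 ≤ v0)
    (κ : Fin n → ℝ) (κ0 : ℝ)
    (hκ1 : ∀ i, κ i ≤ Aᵀ.mulVec u i + u0 * (if i = j then 1 else 0))
    (hκ2 : ∀ i, κ i ≤ Aᵀ.mulVec v i - v0 * (if i = j then 1 else 0))
    (hκ01 : u ⬝ᵥ b ≤ κ0) (hκ02 : v ⬝ᵥ b - v0 ≤ κ0) :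
    ∀ z ∈ convexHull ℝ
      ({z : Fin n → ℝ | A.mulVec z ≤ b ∧ z j = 0} ∪
       {z : Fin n → ℝ | A.mulVec z ≤ b ∧ z j = 1}),
      κ ⬝ᵥ z ≤ κ0 := by
  intro z hz
  have hconv : Convex ℝ {z : Fin n → ℝ | κ ⬝ᵥ z ≤ κ0} := by
    have : {z : Fin n → ℝ | κ ⬝ᵥ z ≤ κ0} = {z | (⟨⟨fun w => κ ⬝ᵥ w, fun a c => by
        simp [dotProduct_add]⟩, fun c a => by
        simp [dotProduct_smul]⟩ : (Fin n → ℝ) →ₗ[ℝ] ℝ) z ≤ κ0} := rfl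
    rw [this]
    exact convex_halfSpace_le (LinearMap.isLinear _) κ0
  have key : ({z : Fin n → ℝ | A.mulVec z ≤ b ∧ z j = 0} ∪
       {z : Fin n → ℝ | A.mulVec z ≤ b ∧ z j = 1}) ⊆ {z : Fin n → ℝ | κ ⬝ᵥ z ≤ κ0} := by
    have hstep : ∀ (w : Fin n → ℝ), A.mulVec w ≤ b → ∀ (c : Fin mR → ℝ) (c0 : ℝ),
        (∀ i, κ i ≤ Aᵀ.mulVec c i + c0 * (if i = j then 1 else 0)) →
        κ ⬝ᵥ w ≤ c ⬝ᵥ A.mulVec w + c0 * w j := by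
      intro w hw c c0 hc
      have hpos : ∀ i, 0 ≤ w i := fun i => (hbounds w hw i).1
      have h1 : κ ⬝ᵥ w ≤ (fun i => Aᵀ.mulVec c i + c0 * (if i = j then 1 else 0)) ⬝ᵥ w := by
        apply Finset.sum_le_sum
        intro i _
        exact mul_le_mul_of_nonneg_right (hc i) (hpos i)
      calc κ ⬝ᵥ w ≤ (fun i => Aᵀ.mulVec c i + c0 * (if i = j then 1 else 0)) ⬝ᵥ w := h1
        _ = Aᵀ.mulVec c ⬝ᵥ w + c0 * w j := by
            simp only [dotProduct, add_mul, Finset.sum_add_distrib, ite_mul, one_mul,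
              zero_mul, mul_ite, mul_zero, mul_one]
            rw [Finset.sum_ite_eq' Finset.univ j (fun x => c0 * w x)]
            simp
        _ = c ⬝ᵥ A.mulVec w + c0 * w j := by
            rw [Matrix.mulVec_transpose, ← Matrix.dotProduct_mulVec]
    have hdot : ∀ (w : Fin n → ℝ), A.mulVec w ≤ b → ∀ (c : Fin mR → ℝ), 0 ≤ c →
        c ⬝ᵥ A.mulVec w ≤ c ⬝ᵥ b := by
      intro w hw c hc
      apply Finset.sum_le_sum
      intro i _
      exact mul_le_mul_of_nonneg_left (hw i) (hc i)
    rintro w (⟨hw, hwj⟩ | ⟨hw, hwj⟩)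
    · calc κ ⬝ᵥ w ≤ u ⬝ᵥ A.mulVec w + u0 * w j := hstep w hw u u0 hκ1
        _ = u ⬝ᵥ A.mulVec w := by rw [hwj]; ring
        _ ≤ u ⬝ᵥ b := hdot w hw u hu
        _ ≤ κ0 := hκ01
    · calc κ ⬝ᵥ w ≤ v ⬝ᵥ A.mulVec w + (-v0) * w j := by
            refine hstep w hw v (-v0) (fun i => ?_)
            have := hκ2 i
            rcases eq_or_ne i j with h | h <;> simp [h] at this ⊢ <;> linarith
        _ = v ⬝ᵥ A.mulVec w - v0 := by rw [hwj]; ring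
        _ ≤ v ⬝ᵥ b - v0 := by linarith [hdot w hw v hv]
        _ ≤ κ0 := hκ02
  exact convexHull_min key hconv hz
end
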